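/- arXiv:1507.06806 — 6 statements merged into one kernel-verified Lean document; each statement's English description precedes it below -/
import Mathlib

section
/- For every real number λ with 11/7 ≤ λ < 2, one has 29(λ-1)/√((48-24λ)² + (29λ-29)²) ≤ (8λ-5)/√((8λ-5)² + (12-6λ)²). -/
/-!
Both sides have the shape `a / √(a² + b²)`, the cosine of the angle of the vector `(a, b)` with
the first axis, which decreases as the slope `b / a` grows. Here `48 - 24λ = 4 (12 - 6λ)`, so
comparing the slopes reduces to the linear inequality `29 (λ - 1) ≤ 4 (8λ - 5)`.
-/

theorem div_sqrt_sq_add_sq_le_div_sqrt_sq_add_sq {a b c d : ℝ} (ha : 0 ≤ a) (hc : 0 < c)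
    (hd : 0 ≤ d) (h : a * d ≤ c * b) :
    a / √(a ^ 2 + b ^ 2) ≤ c / √(c ^ 2 + d ^ 2) := by
  rcases ha.eq_or_lt with rfl | ha
  · simp only [ne_eq, OfNat.ofNat_ne_zero, not_false_eq_true, zero_pow, zero_add, zero_div]
    positivity
  rw [div_le_div_iff₀ (by positivity) (by positivity)]
  have hsq : (a * d) ^ 2 ≤ (c * b) ^ 2 := pow_le_pow_left₀ (by positivity) h 2
  rw [← pow_le_pow_iff_left₀ (by positivity) (by positivity) two_ne_zero, mul_pow, mul_pow,
    Real.sq_sqrt (by positivity), Real.sq_sqrt (by positivity)]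
  nlinarith

theorem stmt_1 (l : ℝ) (h1 : 11 / 7 ≤ l) (h2 : l < 2) :
    29 * (l - 1) / Real.sqrt ((48 - 24 * l) ^ 2 + (29 * l - 29) ^ 2) ≤
      (8 * l - 5) / Real.sqrt ((8 * l - 5) ^ 2 + (12 - 6 * l) ^ 2) := by
  have hslope : 29 * (l - 1) * (12 - 6 * l) ≤ (8 * l - 5) * (48 - 24 * l) := by
    have hd : 0 ≤ 12 - 6 * l := by linarith
    nlinarith [mul_le_mul_of_nonneg_right (by linarith : 29 * (l - 1) ≤ 4 * (8 * l - 5)) hd]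
  rw [show 29 * l - 29 = 29 * (l - 1) by ring, add_comm]
  exact div_sqrt_sq_add_sq_le_div_sqrt_sq_add_sq (by linarith) (by linarith) (by linarith)
    hslope
end

section
/- Let λ ≥ 1 and suppose 0 < cos α ≤ 1 with cos α > 29(λ-1)/√((48-24λ)² + (29λ-29)²) and 1 ≤ λ < 2. Then (3 cos α + (29/16)√(1 - cos²α)) - λ(3/2 cos α + (29/16)√(1 - cos²α)) > 0, i.e. (3 - (3/2)λ) cos α > (29/16)(λ - 1)√(1 - cos²α). -/
/-!
With `a = 48 - 24λ > 0` and `b = 29(λ - 1) ≥ 0` the claim reads `b √(1 - c²) < a c` (after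
multiplying by 16), and squaring the hypothesis `b < c √(a² + b²)` gives exactly
`b² (1 - c²) < a² c²`.
-/

open Real

theorem mul_sqrt_one_sub_sq_lt_mul {a b c : ℝ} (ha : 0 < a) (hb : 0 ≤ b)
    (h : b < c * √(a ^ 2 + b ^ 2)) : b * √(1 - c ^ 2) < a * c := by
  have hS : √(a ^ 2 + b ^ 2) ^ 2 = a ^ 2 + b ^ 2 := sq_sqrt (by positivity)
  have hc : 0 < c := by
    by_contra! hc
    nlinarith [mul_nonpos_of_nonpos_of_nonneg hc (sqrt_nonneg (a ^ 2 + b ^ 2))]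
  rcases le_or_gt c 1 with hc1 | hc1
  · have ht : √(1 - c ^ 2) ^ 2 = 1 - c ^ 2 := sq_sqrt (by nlinarith)
    have hsq : b ^ 2 < c ^ 2 * (a ^ 2 + b ^ 2) := by
      rw [← hS, ← mul_pow]
      exact pow_lt_pow_left₀ h hb two_ne_zero
    refine lt_of_pow_lt_pow_left₀ 2 (by positivity) ?_
    rw [mul_pow, mul_pow, ht]
    linarith
  · rw [sqrt_eq_zero'.2 (by nlinarith), mul_zero]
    positivity

theorem stmt_2_general (l c : ℝ) (h1 : 1 ≤ l) (h2 : l < 2)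
    (hc : c > 29 * (l - 1) / Real.sqrt ((48 - 24 * l) ^ 2 + (29 * l - 29) ^ 2)) :
    (3 * c + 29 / 16 * Real.sqrt (1 - c ^ 2)) -
      l * (3 / 2 * c + 29 / 16 * Real.sqrt (1 - c ^ 2)) > 0 := by
  have hS : 0 < √((48 - 24 * l) ^ 2 + (29 * l - 29) ^ 2) := sqrt_pos.2 (by nlinarith)
  have key : (29 * l - 29) * √(1 - c ^ 2) < (48 - 24 * l) * c := by
    refine mul_sqrt_one_sub_sq_lt_mul (by linarith) (by linarith) ?_
    rw [gt_iff_lt, div_lt_iff₀ hS] at hc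
    linarith
  linear_combination key / 16

theorem stmt_2 (l c : ℝ) (h1 : 1 ≤ l) (h2 : l < 2) (hc0 : 0 < c) (hc1 : c ≤ 1)
    (hc : c > 29 * (l - 1) / Real.sqrt ((48 - 24 * l) ^ 2 + (29 * l - 29) ^ 2)) :
    (3 * c + 29 / 16 * Real.sqrt (1 - c ^ 2)) -
      l * (3 / 2 * c + 29 / 16 * Real.sqrt (1 - c ^ 2)) > 0 :=
  stmt_2_general l c h1 h2 hc
end

section
/- On a Kähler manifold, for any tangent vectors X and Y, the sectional-type curvature quantity R(X,Y) := R(X,Y,X,Y) satisfies R(X,Y) = (1/32)[3R(X+JY) + 3R(X-JY) - R(X+Y) - R(X-Y) - 4R(X) - 4R(Y)], where R(Z) := R(Z, JZ, Z, JZ). -/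
/-!
Write `Q Z = R(Z, JZ, Z, JZ)`. Expanding the quartic form `Q` and adding `Q(X + Y) + Q(X - Y)` kills
the odd terms; with the symmetries of a Kähler curvature tensor what is left is
`2 Q X + 2 Q Y + 4 R(X,JX,Y,JY) + 8 R(X,JY,X,JY)`. Replacing `Y` by `JY` swaps the roles of the two
sectional curvatures `R(X,Y,X,Y)` and `R(X,JY,X,JY)`, and the Bianchi identity expresses the
bisectional curvature `R(X,JX,Y,JY)` as their sum. Three times the identity for `JY` minus the
identity for `Y` then eliminates everything but `R(X,Y,X,Y)`.
-/

namespace KahlerCurvature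

variable {V : Type*} [AddCommGroup V] [Module ℝ V]
  {R : V →ₗ[ℝ] V →ₗ[ℝ] V →ₗ[ℝ] V →ₗ[ℝ] ℝ} {J : V →ₗ[ℝ] V}

def holSec (R : V →ₗ[ℝ] V →ₗ[ℝ] V →ₗ[ℝ] V →ₗ[ℝ] ℝ) (J : V →ₗ[ℝ] V) (Z : V) : ℝ :=
  R Z (J Z) Z (J Z)

-- `map_sub` does not fire in the first slot: instance search misses the `AddCommGroup` structure
-- on `V →ₗ[ℝ] V →ₗ[ℝ] V →ₗ[ℝ] ℝ`.
theorem map_sub₄ (x y z w u : V) : R (x - y) z w u = R x z w u - R y z w u := by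
  rw [sub_eq_add_neg, ← neg_one_smul ℝ y]
  simp only [map_add, map_smul, LinearMap.add_apply, LinearMap.smul_apply, smul_eq_mul]
  ring

theorem antisymm_left (hskew2 : ∀ x y z w, R x y z w = -R x y w z)
    (hpair : ∀ x y z w, R x y z w = R z w x y) (x y z w : V) :
    R x y z w = -R y x z w := by
  rw [hpair, hskew2, ← hpair]

theorem J_invariant_right (hpair : ∀ x y z w, R x y z w = R z w x y)
    (hJinv : ∀ x y z w, R (J x) (J y) z w = R x y z w) (x y z w : V) :
    R x y (J z) (J w) = R x y z w := by
  rw [hpair, hJinv, hpair]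

theorem apply_J_left_eq_neg (hJ2 : ∀ x, J (J x) = -x)
    (hJinv : ∀ x y z w, R (J x) (J y) z w = R x y z w) (x y z w : V) :
    R (J x) y z w = -R x (J y) z w := by
  have h := hJinv x (J y) z w
  simp only [hJ2, map_neg, LinearMap.neg_apply] at h
  linarith

theorem holSec_J (hskew2 : ∀ x y z w, R x y z w = -R x y w z)
    (hpair : ∀ x y z w, R x y z w = R z w x y) (hJ2 : ∀ x, J (J x) = -x) (Y : V) :
    holSec R J (J Y) = holSec R J Y := by
  simp only [holSec, hJ2, map_neg, LinearMap.neg_apply, neg_neg]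
  rw [antisymm_left hskew2 hpair, hskew2]
  ring

theorem holSec_add_add_holSec_sub (hskew2 : ∀ x y z w, R x y z w = -R x y w z)
    (hpair : ∀ x y z w, R x y z w = R z w x y) (hJ2 : ∀ x, J (J x) = -x)
    (hJinv : ∀ x y z w, R (J x) (J y) z w = R x y z w) (X Y : V) :
    holSec R J (X + Y) + holSec R J (X - Y) = 2 * holSec R J X + 2 * holSec R J Y
      + 4 * R X (J X) Y (J Y) + 8 * R X (J Y) X (J Y) := by
  -- the six terms of degree two in `Y` are two copies of `R(X,JX,Y,JY)` and four of `R(X,JY,X,JY)`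
  have hJX_JX : R Y (J X) Y (J X) = R X (J Y) X (J Y) := by
    rw [← hJinv, ← J_invariant_right hpair hJinv, hJ2]
    simp only [map_neg, LinearMap.neg_apply, neg_neg]
    rw [antisymm_left hskew2 hpair, hskew2]
    ring
  have hJY_JX : R X (J Y) Y (J X) = R X (J Y) X (J Y) := by
    rw [← J_invariant_right hpair hJinv X (J Y) Y (J X), hJ2, map_neg, hskew2, neg_neg]
  simp only [holSec, map_add, map_sub, map_sub₄, LinearMap.add_apply, LinearMap.sub_apply]
  linear_combination (2 : ℝ) * hpair Y (J Y) X (J X) + 2 * hJX_JX + 2 * hJY_JX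
    + 2 * (hpair Y (J X) X (J Y)).trans hJY_JX

theorem bisectional_eq_sectional_add_sectional (hskew2 : ∀ x y z w, R x y z w = -R x y w z)
    (hpair : ∀ x y z w, R x y z w = R z w x y)
    (hbianchi : ∀ x y z w, R x y z w + R y z x w + R z x y w = 0) (hJ2 : ∀ x, J (J x) = -x)
    (hJinv : ∀ x y z w, R (J x) (J y) z w = R x y z w) (X Y : V) :
    R X (J X) Y (J Y) = R X (J Y) X (J Y) + R X Y X Y := by
  have := hbianchi X (J X) Y (J Y)
  rw [apply_J_left_eq_neg hJ2 hJinv, J_invariant_right hpair hJinv,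
    antisymm_left hskew2 hpair Y] at this
  linarith

end KahlerCurvature

open KahlerCurvature

theorem stmt_3_general {V : Type*} [AddCommGroup V] [Module ℝ V]
    (R : V →ₗ[ℝ] V →ₗ[ℝ] V →ₗ[ℝ] V →ₗ[ℝ] ℝ) (J : V →ₗ[ℝ] V)
    (hskew2 : ∀ x y z w, R x y z w = -R x y w z)
    (hpair : ∀ x y z w, R x y z w = R z w x y)
    (hbianchi : ∀ x y z w, R x y z w + R y z x w + R z x y w = 0)
    (hJ2 : ∀ x, J (J x) = -x)
    (hJinv : ∀ x y z w, R (J x) (J y) z w = R x y z w)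
    (X Y : V) :
    R X Y X Y = (1 / 32) *
      (3 * R (X + J Y) (J (X + J Y)) (X + J Y) (J (X + J Y))
       + 3 * R (X - J Y) (J (X - J Y)) (X - J Y) (J (X - J Y))
       - R (X + Y) (J (X + Y)) (X + Y) (J (X + Y))
       - R (X - Y) (J (X - Y)) (X - Y) (J (X - Y))
       - 4 * R X (J X) X (J X) - 4 * R Y (J Y) Y (J Y)) := by
  have hY := holSec_add_add_holSec_sub hskew2 hpair hJ2 hJinv X Y
  have hJY := holSec_add_add_holSec_sub hskew2 hpair hJ2 hJinv X (J Y)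
  rw [holSec_J hskew2 hpair hJ2, hJ2, hskew2 X (J X) (J Y)] at hJY
  simp only [map_neg, LinearMap.neg_apply, neg_neg] at hJY
  have hb := bisectional_eq_sectional_add_sectional hskew2 hpair hbianchi hJ2 hJinv X Y
  simp only [holSec] at hY hJY
  linarith

/-- Sectional curvature through holomorphic sectional curvature on a Kähler manifold,
stated for an algebraic curvature tensor `R` on a real vector space with a compatible
complex structure `J`. -/
theorem stmt_3 {V : Type*} [AddCommGroup V] [Module ℝ V]
    (R : V →ₗ[ℝ] V →ₗ[ℝ] V →ₗ[ℝ] V →ₗ[ℝ] ℝ) (J : V →ₗ[ℝ] V)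
    (hskew1 : ∀ x y z w, R x y z w = -R y x z w)
    (hskew2 : ∀ x y z w, R x y z w = -R x y w z)
    (hpair : ∀ x y z w, R x y z w = R z w x y)
    (hbianchi : ∀ x y z w, R x y z w + R y z x w + R z x y w = 0)
    (hJ2 : ∀ x, J (J x) = -x)
    (hJinv : ∀ x y z w, R (J x) (J y) z w = R x y z w)
    (X Y : V) :
    R X Y X Y = (1 / 32) *
      (3 * R (X + J Y) (J (X + J Y)) (X + J Y) (J (X + J Y))
       + 3 * R (X - J Y) (J (X - J Y)) (X - J Y) (J (X - J Y))
       - R (X + Y) (J (X + Y)) (X + Y) (J (X + Y))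
       - R (X - Y) (J (X - Y)) (X - Y) (J (X - Y))
       - 4 * R X (J X) X (J X) - 4 * R Y (J Y) Y (J Y)) :=
  stmt_3_general R J hskew2 hpair hbianchi hJ2 hJinv X Y
end

section
/- Let (M,g,J) be a Kähler manifold whose holomorphic sectional curvatures lie in [k₁, k₂]. For any two orthogonal tangent vectors X, Y at a point, with a = |X|², b = |Y|², x = ⟨JX, Y⟩, the sectional-type quantity R(X,Y) = R(X,Y,X,Y) satisfies (1/16)[(3(a+b)² + 12x²)k₁ - (3a² + 3b² + 2ab)k₂] ≤ R(X,Y) ≤ (1/16)[(3(a+b)² + 12x²)k₂ - (3a² + 3b² + 2ab)k₁]. -/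
/-!
Write `H z = R z (J z) z (J z)`. In `H (x + y) + H (x - y)` the terms of odd degree in `y` cancel,
and the Kähler symmetries reduce the rest to `2 H x + 2 H y + 4 R(x,Jx,y,Jy) + 8 R(x,Jy,x,Jy)`;
replacing `y` by `J y` trades `R(x,Jy,x,Jy)` for `R(x,y,x,y)`. The Bianchi identity gives
`R(x,Jx,y,Jy) = R(x,y,x,y) + R(x,Jy,x,Jy)`, and eliminating the two mixed terms yields
`32 R(x,y,x,y) = 3 H(x+Jy) + 3 H(x-Jy) - H(x+y) - H(x-y) - 4 H x - 4 H y`.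
Each `H` is then bounded by `k₁ ‖z‖⁴` and `k₂ ‖z‖⁴`, where for orthogonal `X, Y` the squared norms
are `a + b ∓ 2x` and `a + b`.
-/

open scoped RealInnerProductSpace

section

variable {V : Type*} [NormedAddCommGroup V] [InnerProductSpace ℝ V]

structure IsKaehlerCurvature (R : V →ₗ[ℝ] V →ₗ[ℝ] V →ₗ[ℝ] V →ₗ[ℝ] ℝ) (J : V →ₗ[ℝ] V) : Prop where
  skew_left : ∀ x y z w, R x y z w = -R y x z w
  skew_right : ∀ x y z w, R x y z w = -R x y w z
  pair_symm : ∀ x y z w, R x y z w = R z w x y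
  bianchi : ∀ x y z w, R x y z w + R y z x w + R z x y w = 0
  J_J : ∀ v, J (J v) = -v
  J_invariant : ∀ x y z w, R (J x) (J y) z w = R x y z w

/-- The paper's `R(Z)`: the holomorphic sectional curvature of `Z`, not divided by `‖Z‖⁴`. -/
def holCurv (R : V →ₗ[ℝ] V →ₗ[ℝ] V →ₗ[ℝ] V →ₗ[ℝ] ℝ) (J : V →ₗ[ℝ] V) (z : V) : ℝ :=
  R z (J z) z (J z)

/-- `map_sub` and `map_neg` in the first slot of a curvature tensor need an `AddCommGroup` instance
on `V →ₗ[ℝ] V →ₗ[ℝ] V →ₗ[ℝ] ℝ` that instance search does not find; scalars avoid it. -/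
theorem sub_eq_add_neg_one_smul (u v : V) : u - v = u + (-1 : ℝ) • v := by
  rw [neg_one_smul, sub_eq_add_neg]

namespace IsKaehlerCurvature

variable {R : V →ₗ[ℝ] V →ₗ[ℝ] V →ₗ[ℝ] V →ₗ[ℝ] ℝ} {J : V →ₗ[ℝ] V}

theorem apply_J_comm (hR : IsKaehlerCurvature R J) (x y z w : V) :
    R y (J x) z w = R x (J y) z w := by
  have h := hR.J_invariant y (J x) z w
  rw [hR.J_J, ← neg_one_smul ℝ x] at h
  simp only [map_smul, LinearMap.smul_apply, smul_eq_mul] at h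
  linear_combination -h - hR.skew_left (J y) x z w

theorem apply_J_comm_right (hR : IsKaehlerCurvature R J) (x y z w : V) :
    R z w y (J x) = R z w x (J y) := by
  rw [hR.pair_symm, hR.apply_J_comm, hR.pair_symm]

theorem holCurv_add_add_holCurv_sub (hR : IsKaehlerCurvature R J) (x y : V) :
    holCurv R J (x + y) + holCurv R J (x - y) =
      2 * holCurv R J x + 2 * holCurv R J y + 4 * R x (J x) y (J y) + 8 * R x (J y) x (J y) := by
  simp only [holCurv, sub_eq_add_neg_one_smul, map_add, map_smul, LinearMap.smul_apply, smul_eq_mul,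
    LinearMap.add_apply]
  linear_combination 2 * hR.pair_symm y (J y) x (J x) + 2 * hR.apply_J_comm x y y (J x)
    + 4 * hR.apply_J_comm_right x y x (J y) + 2 * hR.apply_J_comm x y x (J y)

theorem holCurv_J (hR : IsKaehlerCurvature R J) (y : V) : holCurv R J (J y) = holCurv R J y := by
  rw [holCurv, hR.J_invariant, hR.pair_symm, hR.J_invariant, holCurv]

theorem holCurv_add_J_add_holCurv_sub_J (hR : IsKaehlerCurvature R J) (x y : V) :
    holCurv R J (x + J y) + holCurv R J (x - J y) =
      2 * holCurv R J x + 2 * holCurv R J y + 4 * R x (J x) y (J y) + 8 * R x y x y := by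
  have h := hR.holCurv_add_add_holCurv_sub x (J y)
  rw [hR.holCurv_J, hR.J_J, ← neg_one_smul ℝ y] at h
  simp only [map_smul, LinearMap.smul_apply, smul_eq_mul] at h
  linear_combination h - 4 * hR.skew_right x (J x) (J y) y

theorem apply_J_self_J_self (hR : IsKaehlerCurvature R J) (x y : V) :
    R x (J x) y (J y) = R x y x y + R x (J y) x (J y) := by
  have h₁ : R (J x) y x (J y) = -R x (J y) x (J y) := by rw [hR.skew_left, hR.apply_J_comm]
  have h₂ : R y x (J x) (J y) = -R x y x y := by
    rw [hR.pair_symm, hR.J_invariant, hR.skew_right]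
  linear_combination hR.bianchi x (J x) y (J y) - h₁ - h₂

theorem thirty_two_mul_apply_eq_holCurv (hR : IsKaehlerCurvature R J) (x y : V) :
    32 * R x y x y = 3 * holCurv R J (x + J y) + 3 * holCurv R J (x - J y)
      - holCurv R J (x + y) - holCurv R J (x - y) - 4 * holCurv R J x - 4 * holCurv R J y := by
  linear_combination hR.holCurv_add_add_holCurv_sub x y - 3 * hR.holCurv_add_J_add_holCurv_sub_J x y
    - 8 * hR.apply_J_self_J_self x y

end IsKaehlerCurvature

theorem inner_J_right {J : V →ₗ[ℝ] V} (hJ2 : ∀ v, J (J v) = -v)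
    (hJiso : ∀ v w : V, ⟪J v, J w⟫ = ⟪v, w⟫) (v w : V) : ⟪v, J w⟫ = -⟪J v, w⟫ := by
  rw [← hJiso v (J w), hJ2, inner_neg_right]

theorem norm_J_sq {J : V →ₗ[ℝ] V} (hJiso : ∀ v w : V, ⟪J v, J w⟫ = ⟪v, w⟫) (v : V) :
    ‖J v‖ ^ 2 = ‖v‖ ^ 2 := by
  rw [← real_inner_self_eq_norm_sq, hJiso, real_inner_self_eq_norm_sq]

theorem norm_add_J_sq {J : V →ₗ[ℝ] V} (hJ2 : ∀ v, J (J v) = -v)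
    (hJiso : ∀ v w : V, ⟪J v, J w⟫ = ⟪v, w⟫) (x y : V) :
    ‖x + J y‖ ^ 2 = ‖x‖ ^ 2 + ‖y‖ ^ 2 - 2 * ⟪J x, y⟫ := by
  rw [norm_add_sq_real, inner_J_right hJ2 hJiso, norm_J_sq hJiso]
  ring

theorem norm_sub_J_sq {J : V →ₗ[ℝ] V} (hJ2 : ∀ v, J (J v) = -v)
    (hJiso : ∀ v w : V, ⟪J v, J w⟫ = ⟪v, w⟫) (x y : V) :
    ‖x - J y‖ ^ 2 = ‖x‖ ^ 2 + ‖y‖ ^ 2 + 2 * ⟪J x, y⟫ := by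
  rw [norm_sub_sq_real, inner_J_right hJ2 hJiso, norm_J_sq hJiso]
  ring

end

/-- Two-sided bound on sectional-type curvature in terms of holomorphic sectional
curvature bounds on a Kähler manifold (algebraic model at a point). -/
theorem stmt_5 {V : Type*} [NormedAddCommGroup V] [InnerProductSpace ℝ V]
    (R : V →ₗ[ℝ] V →ₗ[ℝ] V →ₗ[ℝ] V →ₗ[ℝ] ℝ) (J : V →ₗ[ℝ] V)
    (hskew1 : ∀ x y z w, R x y z w = -R y x z w)
    (hskew2 : ∀ x y z w, R x y z w = -R x y w z)
    (hpair : ∀ x y z w, R x y z w = R z w x y)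
    (hbianchi : ∀ x y z w, R x y z w + R y z x w + R z x y w = 0)
    (hJ2 : ∀ v, J (J v) = -v)
    (hJiso : ∀ v w : V, ⟪J v, J w⟫ = ⟪v, w⟫)
    (hJinv : ∀ x y z w, R (J x) (J y) z w = R x y z w)
    (k₁ k₂ : ℝ)
    (hlow : ∀ z : V, k₁ * ‖z‖ ^ 4 ≤ R z (J z) z (J z))
    (hhigh : ∀ z : V, R z (J z) z (J z) ≤ k₂ * ‖z‖ ^ 4)
    (X Y : V) (horth : ⟪X, Y⟫ = 0)
    (a b x : ℝ) (ha : a = ‖X‖ ^ 2) (hb : b = ‖Y‖ ^ 2) (hx : x = ⟪J X, Y⟫) :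
    (1 / 16) * ((3 * (a + b) ^ 2 + 12 * x ^ 2) * k₁ - (3 * a ^ 2 + 3 * b ^ 2 + 2 * a * b) * k₂)
      ≤ R X Y X Y ∧
    R X Y X Y ≤
      (1 / 16) * ((3 * (a + b) ^ 2 + 12 * x ^ 2) * k₂ - (3 * a ^ 2 + 3 * b ^ 2 + 2 * a * b) * k₁) := by
  have hR : IsKaehlerCurvature R J := ⟨hskew1, hskew2, hpair, hbianchi, hJ2, hJinv⟩
  have bounds (z : V) (s : ℝ) (hs : ‖z‖ ^ 2 = s) :
      k₁ * s ^ 2 ≤ holCurv R J z ∧ holCurv R J z ≤ k₂ * s ^ 2 := by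
    rw [← hs, ← pow_mul]
    exact ⟨hlow z, hhigh z⟩
  obtain ⟨l₁, u₁⟩ := bounds (X + J Y) (a + b - 2 * x) (by rw [norm_add_J_sq hJ2 hJiso, ha, hb, hx])
  obtain ⟨l₂, u₂⟩ := bounds (X - J Y) (a + b + 2 * x) (by rw [norm_sub_J_sq hJ2 hJiso, ha, hb, hx])
  obtain ⟨l₃, u₃⟩ := bounds (X + Y) (a + b) (by rw [norm_add_sq_real, horth, ha, hb]; ring)
  obtain ⟨l₄, u₄⟩ := bounds (X - Y) (a + b) (by rw [norm_sub_sq_real, horth, ha, hb]; ring)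
  obtain ⟨l₅, u₅⟩ := bounds X a ha.symm
  obtain ⟨l₆, u₆⟩ := bounds Y b hb.symm
  have key := hR.thirty_two_mul_apply_eq_holCurv X Y
  constructor
  · linear_combination (3 * l₁ + 3 * l₂ + u₃ + u₄ + 4 * u₅ + 4 * u₆ - key) / 32
  · linear_combination (3 * u₁ + 3 * u₂ + l₃ + l₄ + 4 * l₅ + 4 * l₆ + key) / 32
end

section
/- Let e₁, e₂, e₃, e₄ be an orthonormal frame on a Kähler surface with holomorphic sectional curvatures in [k₁,k₂] (k₁ > 0), such that Je₁ = cos α·e₂ + y·e₃ + z·e₄ with cos²α + y² + z² = 1 and the complex structure takes the standard form (so ⟨Je₃,e₄⟩ = cos α, ⟨Je₁,e₃⟩ = ⟨Je₄,e₂⟩ = y, ⟨Je₁,e₄⟩ = ⟨Je₂,e₃⟩ = z). Then (1/4)[(3 + 3cos²α)k₁ - 2k₂] ≤ R₁₂₁₂ ≤ (1/4)[(3 + 3cos²α)k₂ - 2k₁]. -/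
open scoped RealInnerProductSpace

/-!
For a Kähler curvature tensor, `R(X,Y,X,Y)` is a fixed linear combination of the holomorphic
curvatures `H(v) = R(v,Jv,v,Jv)` at `X ± JY`, `X ± Y`, `X` and `Y`, with positive coefficients
only at `X ± JY`. Bounding each `H(v)` between `k₁‖v‖⁴` and `k₂‖v‖⁴` and computing the norms
(`‖X ± JY‖² = ‖X‖² + ‖Y‖² ∓ 2⟪JX, Y⟫` and `‖X ± Y‖² = ‖X‖² + ‖Y‖²` for `X ⊥ Y`) gives the
estimate; for orthonormal `e₁, e₂` one has `⟪Je₁, e₂⟫ = cos α`.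
-/

section Polarization

variable {V : Type*} [AddCommGroup V] [Module ℝ V]
  (R : V →ₗ[ℝ] V →ₗ[ℝ] V →ₗ[ℝ] V →ₗ[ℝ] ℝ) (J : V →ₗ[ℝ] V)

def holomorphicCurvature (v : V) : ℝ := R v (J v) v (J v)

variable {R J}

theorem curvature_eq_holomorphicCurvature_polarization
    (hskew1 : ∀ x y z w, R x y z w = -R y x z w)
    (hskew2 : ∀ x y z w, R x y z w = -R x y w z)
    (hpair : ∀ x y z w, R x y z w = R z w x y)
    (hbianchi : ∀ x y z w, R x y z w + R y z x w + R z x y w = 0)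
    (hJ2 : ∀ v, J (J v) = -v)
    (hJinv : ∀ x y z w, R (J x) (J y) z w = R x y z w)
    (X Y : V) :
    R X Y X Y =
      3 / 32 * (holomorphicCurvature R J (X + J Y) + holomorphicCurvature R J (X - J Y))
      - 1 / 32 * (holomorphicCurvature R J (X + Y) + holomorphicCurvature R J (X - Y))
      - 1 / 8 * (holomorphicCurvature R J X + holomorphicCurvature R J Y) := by
  have hJXY := hJinv X (J Y) X (J Y)
  have hJXYYX := hJinv X (J Y) Y (J X)
  simp only [hJ2, map_neg, LinearMap.neg_apply] at hJXY hJXYYX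
  have := hJinv X Y X Y
  have := hJinv Y X (J Y) (J X)
  have := hskew1 X Y (J X) (J Y)
  have := hskew2 X Y (J X) (J Y)
  have := hpair X Y (J X) (J Y)
  have := hbianchi X Y (J X) (J Y)
  have := hskew1 X Y (J Y) (J X)
  have := hpair X Y (J Y) (J X)
  have := hbianchi X Y (J Y) (J X)
  have := hskew1 X (J X) Y (J Y)
  have := hskew2 X (J X) Y (J Y)
  have := hpair X (J X) Y (J Y)
  have := hbianchi X (J X) Y (J Y)
  have := hpair X (J X) (J Y) Y
  have := hskew1 X (J Y) Y (J X)
  have := hskew1 Y Y (J X) (J X)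
  have := hbianchi Y Y (J X) (J X)
  have := hskew2 Y (J Y) Y (J Y)
  have := hskew1 Y (J Y) (J Y) Y
  -- `map_sub` and `map_neg` fail to synthesize instances on the outer arguments of `R`,
  -- while `map_smul` applies, so differences are written with `(-1) •`.
  rw [sub_eq_add_neg X, sub_eq_add_neg X, ← neg_one_smul ℝ (J Y), ← neg_one_smul ℝ Y]
  simp only [holomorphicCurvature, hJ2, ← neg_one_smul ℝ Y, map_add, map_smul, LinearMap.add_apply,
    LinearMap.smul_apply, smul_eq_mul]
  linarith

end Polarization

section Pinching

variable {V : Type*} [NormedAddCommGroup V] [InnerProductSpace ℝ V]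
  {R : V →ₗ[ℝ] V →ₗ[ℝ] V →ₗ[ℝ] V →ₗ[ℝ] ℝ} {J : V →ₗ[ℝ] V}

theorem inner_map_right_eq_neg_inner_map_left (hJ2 : ∀ v, J (J v) = -v)
    (hJiso : ∀ v w : V, ⟪J v, J w⟫ = ⟪v, w⟫) (X Y : V) : ⟪X, J Y⟫ = -⟪J X, Y⟫ := by
  rw [← hJiso X, hJ2, inner_neg_right]

theorem curvature_bounds_of_holomorphicCurvature_bounds
    (hskew1 : ∀ x y z w, R x y z w = -R y x z w)
    (hskew2 : ∀ x y z w, R x y z w = -R x y w z)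
    (hpair : ∀ x y z w, R x y z w = R z w x y)
    (hbianchi : ∀ x y z w, R x y z w + R y z x w + R z x y w = 0)
    (hJ2 : ∀ v, J (J v) = -v)
    (hJiso : ∀ v w : V, ⟪J v, J w⟫ = ⟪v, w⟫)
    (hJinv : ∀ x y z w, R (J x) (J y) z w = R x y z w)
    {k₁ k₂ : ℝ}
    (hlow : ∀ v, k₁ * ‖v‖ ^ 4 ≤ holomorphicCurvature R J v)
    (hhigh : ∀ v, holomorphicCurvature R J v ≤ k₂ * ‖v‖ ^ 4)
    {X Y : V} (hXY : ⟪X, Y⟫ = 0) :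
    1 / 16 * ((3 * (‖X‖ ^ 2 + ‖Y‖ ^ 2) ^ 2 + 12 * ⟪J X, Y⟫ ^ 2) * k₁
        - (3 * ‖X‖ ^ 4 + 3 * ‖Y‖ ^ 4 + 2 * ‖X‖ ^ 2 * ‖Y‖ ^ 2) * k₂) ≤ R X Y X Y ∧
      R X Y X Y ≤ 1 / 16 * ((3 * (‖X‖ ^ 2 + ‖Y‖ ^ 2) ^ 2 + 12 * ⟪J X, Y⟫ ^ 2) * k₂
        - (3 * ‖X‖ ^ 4 + 3 * ‖Y‖ ^ 4 + 2 * ‖X‖ ^ 2 * ‖Y‖ ^ 2) * k₁) := by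
  have hJY : ‖J Y‖ ^ 2 = ‖Y‖ ^ 2 := by
    rw [← real_inner_self_eq_norm_sq, hJiso, real_inner_self_eq_norm_sq]
  have hXJY := inner_map_right_eq_neg_inner_map_left hJ2 hJiso X Y
  have h₁ : ‖X + J Y‖ ^ 2 = ‖X‖ ^ 2 + ‖Y‖ ^ 2 - 2 * ⟪J X, Y⟫ := by
    rw [norm_add_sq_real, hXJY, hJY]; ring
  have h₂ : ‖X - J Y‖ ^ 2 = ‖X‖ ^ 2 + ‖Y‖ ^ 2 + 2 * ⟪J X, Y⟫ := by
    rw [norm_sub_sq_real, hXJY, hJY]; ring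
  have h₃ : ‖X + Y‖ ^ 2 = ‖X‖ ^ 2 + ‖Y‖ ^ 2 := by rw [norm_add_sq_real, hXY]; ring
  have h₄ : ‖X - Y‖ ^ 2 = ‖X‖ ^ 2 + ‖Y‖ ^ 2 := by rw [norm_sub_sq_real, hXY]; ring
  have hsq (v : V) : ‖v‖ ^ 4 = (‖v‖ ^ 2) ^ 2 := by ring
  have hl₁ := hlow (X + J Y); have hh₁ := hhigh (X + J Y)
  have hl₂ := hlow (X - J Y); have hh₂ := hhigh (X - J Y)
  have hl₃ := hlow (X + Y); have hh₃ := hhigh (X + Y)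
  have hl₄ := hlow (X - Y); have hh₄ := hhigh (X - Y)
  have hl₅ := hlow X; have hh₅ := hhigh X
  have hl₆ := hlow Y; have hh₆ := hhigh Y
  rw [hsq, h₁] at hl₁ hh₁
  rw [hsq, h₂] at hl₂ hh₂
  rw [hsq, h₃] at hl₃ hh₃
  rw [hsq, h₄] at hl₄ hh₄
  rw [curvature_eq_holomorphicCurvature_polarization hskew1 hskew2 hpair hbianchi hJ2 hJinv X Y]
  constructor <;> linarith

end Pinching

theorem stmt_6_general {V : Type*} [NormedAddCommGroup V] [InnerProductSpace ℝ V]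
    (R : V →ₗ[ℝ] V →ₗ[ℝ] V →ₗ[ℝ] V →ₗ[ℝ] ℝ) (J : V →ₗ[ℝ] V)
    (hskew1 : ∀ x y z w, R x y z w = -R y x z w)
    (hskew2 : ∀ x y z w, R x y z w = -R x y w z)
    (hpair : ∀ x y z w, R x y z w = R z w x y)
    (hbianchi : ∀ x y z w, R x y z w + R y z x w + R z x y w = 0)
    (hJ2 : ∀ v, J (J v) = -v)
    (hJiso : ∀ v w : V, ⟪J v, J w⟫ = ⟪v, w⟫)
    (hJinv : ∀ x y z w, R (J x) (J y) z w = R x y z w)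
    (k₁ k₂ : ℝ)
    (hlow : ∀ v : V, k₁ * ‖v‖ ^ 4 ≤ R v (J v) v (J v))
    (hhigh : ∀ v : V, R v (J v) v (J v) ≤ k₂ * ‖v‖ ^ 4)
    (e : Fin 4 → V) (he : Orthonormal ℝ e)
    (c y z : ℝ)
    (hJ1 : J (e 0) = c • e 1 + y • e 2 + z • e 3) :
    (1 / 4) * ((3 + 3 * c ^ 2) * k₁ - 2 * k₂) ≤ R (e 0) (e 1) (e 0) (e 1) ∧
    R (e 0) (e 1) (e 0) (e 1) ≤ (1 / 4) * ((3 + 3 * c ^ 2) * k₂ - 2 * k₁) := by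
  have hc : ⟪J (e 0), e 1⟫ = c := by
    simp [hJ1, inner_add_left, real_inner_smul_left, orthonormal_iff_ite.mp he, he.1 1]
  obtain ⟨hge, hle⟩ := curvature_bounds_of_holomorphicCurvature_bounds hskew1 hskew2 hpair
    hbianchi hJ2 hJiso hJinv hlow hhigh (he.2 (by decide : (0 : Fin 4) ≠ 1))
  rw [he.1 0, he.1 1, hc] at hge hle
  constructor <;> linarith

theorem stmt_6 {V : Type*} [NormedAddCommGroup V] [InnerProductSpace ℝ V]
    (R : V →ₗ[ℝ] V →ₗ[ℝ] V →ₗ[ℝ] V →ₗ[ℝ] ℝ) (J : V →ₗ[ℝ] V)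
    (hskew1 : ∀ x y z w, R x y z w = -R y x z w)
    (hskew2 : ∀ x y z w, R x y z w = -R x y w z)
    (hpair : ∀ x y z w, R x y z w = R z w x y)
    (hbianchi : ∀ x y z w, R x y z w + R y z x w + R z x y w = 0)
    (hJ2 : ∀ v, J (J v) = -v)
    (hJiso : ∀ v w : V, ⟪J v, J w⟫ = ⟪v, w⟫)
    (hJinv : ∀ x y z w, R (J x) (J y) z w = R x y z w)
    (k₁ k₂ : ℝ) (hk₁ : 0 < k₁)
    (hlow : ∀ v : V, k₁ * ‖v‖ ^ 4 ≤ R v (J v) v (J v))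
    (hhigh : ∀ v : V, R v (J v) v (J v) ≤ k₂ * ‖v‖ ^ 4)
    (e : Fin 4 → V) (he : Orthonormal ℝ e)
    (c y z : ℝ) (hcyz : c ^ 2 + y ^ 2 + z ^ 2 = 1)
    (hJ1 : J (e 0) = c • e 1 + y • e 2 + z • e 3)
    (hJ2e : J (e 1) = -c • e 0 + z • e 2 - y • e 3)
    (hJ3 : J (e 2) = -y • e 0 - z • e 1 + c • e 3)
    (hJ4 : J (e 3) = -z • e 0 + y • e 1 - c • e 2) :
    (1 / 4) * ((3 + 3 * c ^ 2) * k₁ - 2 * k₂) ≤ R (e 0) (e 1) (e 0) (e 1) ∧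
    R (e 0) (e 1) (e 0) (e 1) ≤ (1 / 4) * ((3 + 3 * c ^ 2) * k₂ - 2 * k₁) :=
  stmt_6_general R J hskew1 hskew2 hpair hbianchi hJ2 hJiso hJinv k₁ k₂ hlow hhigh e he c y z hJ1
end

section
/- If 1 ≤ λ ≤ 1 + 1/200, then 29(λ-1)/√((48-24λ)² + (29λ-29)²) < √3/3 ≤ √((13λ-10)/(3(λ+2))). -/
/-! For `λ` close to `1` the left-hand quotient is at most `29(λ-1)/(48-24λ)`, which is far below
`1/2 < 1/√3`; on the right, `(13λ-10)/(3(λ+2)) ≥ 1/3` is equivalent to `λ ≥ 1`. -/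

open Real

lemma div_sqrt_sq_add_sq_le_div_abs {a b : ℝ} (ha : 0 ≤ a) (hb : b ≠ 0) :
    a / √(b ^ 2 + a ^ 2) ≤ a / |b| := by
  refine div_le_div_of_nonneg_left ha (abs_pos.2 hb) ?_
  rw [← sqrt_sq_eq_abs]
  exact sqrt_le_sqrt (le_add_of_nonneg_right (sq_nonneg a))

lemma sqrt_three_div_three_eq_sqrt_inv : √3 / 3 = √3⁻¹ := by
  rw [sqrt_inv, ← one_div, ← sqrt_div_self']

lemma half_lt_sqrt_three_div_three : (1 / 2 : ℝ) < √3 / 3 := by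
  have : (3 / 2 : ℝ) < √3 := (lt_sqrt (by norm_num)).2 (by norm_num)
  linarith

theorem stmt_11 (l : ℝ) (h1 : 1 ≤ l) (h2 : l ≤ 1 + 1 / 200) :
    29 * (l - 1) / Real.sqrt ((48 - 24 * l) ^ 2 + (29 * l - 29) ^ 2) < Real.sqrt 3 / 3 ∧
    Real.sqrt 3 / 3 ≤ Real.sqrt ((13 * l - 10) / (3 * (l + 2))) := by
  constructor
  · have hb : 0 < 48 - 24 * l := by linarith
    calc 29 * (l - 1) / √((48 - 24 * l) ^ 2 + (29 * l - 29) ^ 2)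
        ≤ 29 * (l - 1) / |48 - 24 * l| := by
          rw [show 29 * l - 29 = 29 * (l - 1) by ring]
          exact div_sqrt_sq_add_sq_le_div_abs (by linarith) hb.ne'
      _ = 29 * (l - 1) / (48 - 24 * l) := by rw [abs_of_pos hb]
      _ < 1 / 2 := by rw [div_lt_iff₀ hb]; linarith
      _ < √3 / 3 := half_lt_sqrt_three_div_three
  · rw [sqrt_three_div_three_eq_sqrt_inv]
    refine sqrt_le_sqrt ?_
    rw [inv_eq_one_div, div_le_div_iff₀ (by norm_num) (by linarith)]
    linarith
end
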